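/- For Z ~ Beta(1/2,(n−2)/2), n > 3, and 0 < ε < 1/2, setting M₂ = 6·log(5/ε), the probability P(Z > M₂/n) is bounded above by 5·exp(−M₂/6), which equals ε. -/
import Mathlib


open MeasureTheory Real

/-- The Beta function `B(a,b) = Γ(a)Γ(b)/Γ(a+b)`. -/
noncomputable def betaFun (a b : ℝ) : ℝ := Real.Gamma a * Real.Gamma b / Real.Gamma (a + b)

/-- The density of the Beta(a,b) distribution on `[0,1]`. -/
noncomputable def betaPDF (a b x : ℝ) : ℝ :=
  if x ∈ Set.Icc (0 : ℝ) 1 then x ^ (a - 1) * (1 - x) ^ (b - 1) / betaFun a b else 0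

/-- Log-convexity of Gamma gives `Γ(x+1/2) ≤ √x · Γ(x)`. -/
lemma Gamma_add_half_le_aux (x : ℝ) (hx : 0 < x) :
    Real.Gamma (x + 1/2) ≤ Real.sqrt x * Real.Gamma x := by
  have hx1 : (0:ℝ) < x + 1 := by linarith
  have hΓx : 0 < Real.Gamma x := Real.Gamma_pos_of_pos hx
  have hΓx1 : 0 < Real.Gamma (x + 1) := Real.Gamma_pos_of_pos hx1
  have key := Real.convexOn_log_Gamma.2 (Set.mem_Ioi.2 hx) (Set.mem_Ioi.2 hx1)
    (by norm_num : (0:ℝ) ≤ 1/2) (by norm_num : (0:ℝ) ≤ 1/2) (by norm_num)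
  simp only [smul_eq_mul, Function.comp_apply] at key
  have heq : 1/2 * x + 1/2 * (x+1) = x + 1/2 := by ring
  rw [heq] at key
  rw [Real.Gamma_add_one hx.ne'] at key
  rw [Real.log_mul hx.ne' hΓx.ne'] at key
  have hlog : Real.log (Real.Gamma (x + 1/2)) ≤ Real.log (Real.sqrt x * Real.Gamma x) := by
    rw [Real.log_mul (Real.sqrt_pos.2 hx).ne' hΓx.ne', Real.log_sqrt hx.le]
    linarith
  have := Real.exp_le_exp.2 hlog
  rwa [Real.exp_log (Real.Gamma_pos_of_pos (by linarith)),
    Real.exp_log (by positivity)] at this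

set_option maxHeartbeats 1000000 in
/-- For `Z ~ Beta(1/2, (n−2)/2)`, `n > 3`, `0 < ε < 1/2`, with `M₂ = 6 log(5/ε)`:
`P(Z > M₂/n) < 5 exp(−M₂/6)`, and `5 exp(−M₂/6) = ε`. -/
theorem beta_upper_tail_bound (n : ℕ) (hn : 3 < n) (ε : ℝ) (hε0 : 0 < ε)
    (hε2 : ε < 1 / 2) (M₂ : ℝ) (hM₂ : M₂ = 6 * Real.log (5 / ε)) :
    (∫ x in Set.Ioi (M₂ / n), betaPDF (1 / 2) (((n : ℝ) - 2) / 2) x) <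
      5 * Real.exp (-M₂ / 6) ∧
    5 * Real.exp (-M₂ / 6) = ε := by
  have hεd : (0:ℝ) < 5 / ε := by positivity
  -- second part
  have hpart2 : 5 * Real.exp (-M₂ / 6) = ε := by
    rw [hM₂]
    rw [show -(6 * Real.log (5/ε)) / 6 = Real.log ((5/ε)⁻¹) by
      rw [Real.log_inv]; ring]
    rw [Real.exp_log (by positivity)]
    field_simp
  refine ⟨?_, hpart2⟩
  -- basic bounds
  have h10 : (10:ℝ) < 5 / ε := by
    rw [lt_div_iff₀ hε0]; nlinarith
  have hlog1 : 1 < Real.log (5 / ε) := by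
    rw [Real.lt_log_iff_exp_lt hεd]
    calc Real.exp 1 < 2.7182818286 := Real.exp_one_lt_d9
      _ < 10 := by norm_num
      _ < 5 / ε := h10
  have hM6 : 6 < M₂ := by rw [hM₂]; linarith
  have hM0 : 0 < M₂ := by linarith
  have hn4 : (4:ℝ) ≤ (n:ℝ) := by exact_mod_cast hn
  have hn0 : (0:ℝ) < (n:ℝ) := by linarith
  set b : ℝ := ((n:ℝ) - 2) / 2 with hbdef
  set z : ℝ := M₂ / (n:ℝ) with hzdef
  have hb1 : (1:ℝ) ≤ b := by rw [hbdef]; linarith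
  have hb0 : (0:ℝ) < b := by linarith
  have hz0 : 0 < z := by positivity
  have hzb : z * b = M₂ * ((n:ℝ) - 2) / (2 * n) := by
    rw [hzdef, hbdef, div_mul_div_comm, mul_comm (n:ℝ) 2]
  have hzb1 : 1 ≤ z * b := by
    rw [hzb, le_div_iff₀ (by positivity)]
    nlinarith
  have hzbM : M₂ / 6 ≤ z * b := by
    rw [hzb, le_div_iff₀ (by positivity)]
    nlinarith
  have hEpos : 0 < Real.exp (-M₂ / 6) := Real.exp_pos _
  clear_value z b
  clear hzb hbdef hzdef hM₂
  by_cases hz1 : 1 ≤ z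
  · -- tail is empty
    have hzero : (∫ x in Set.Ioi z, betaPDF (1 / 2) b x) = 0 := by
      apply MeasureTheory.setIntegral_eq_zero_of_forall_eq_zero
      intro x hx
      rw [betaPDF, if_neg]
      intro hmem
      exact absurd hmem.2 (not_le.2 (lt_of_le_of_lt hz1 hx))
    rw [hzero]
    positivity
  · push_neg at hz1
    set B : ℝ := betaFun (1/2) b with hBdef
    have hΓb : 0 < Real.Gamma b := Real.Gamma_pos_of_pos hb0
    have hΓs : 0 < Real.Gamma (1/2 + b) := Real.Gamma_pos_of_pos (by linarith)
    have hB0 : 0 < B := by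
      rw [hBdef, betaFun]
      have := Real.Gamma_pos_of_pos (show (0:ℝ) < 1/2 by norm_num)
      positivity
    -- rewrite the integral over (z, 1]
    set g : ℝ → ℝ := fun x => x ^ ((1:ℝ)/2 - 1) * (1 - x) ^ (b - 1) / B with hgdef
    have hrw : (∫ x in Set.Ioi z, betaPDF (1 / 2) b x) = ∫ x in Set.Ioc z 1, g x := by
      have hset : Set.Ioi z ∩ Set.Icc (0:ℝ) 1 = Set.Ioc z 1 := by
        ext x
        simp only [Set.mem_inter_iff, Set.mem_Ioi, Set.mem_Icc, Set.mem_Ioc]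
        constructor
        · rintro ⟨h1, _, h3⟩; exact ⟨h1, h3⟩
        · rintro ⟨h1, h2⟩; exact ⟨h1, le_of_lt (lt_trans hz0 h1), h2⟩
      calc (∫ x in Set.Ioi z, betaPDF (1 / 2) b x)
          = ∫ x in Set.Ioi z, (Set.Icc (0:ℝ) 1).indicator g x :=
            MeasureTheory.setIntegral_congr_fun measurableSet_Ioi
              (fun x _ => by rw [betaPDF, Set.indicator_apply])
        _ = ∫ x in Set.Ioi z ∩ Set.Icc (0:ℝ) 1, g x :=
            MeasureTheory.setIntegral_indicator measurableSet_Icc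
        _ = ∫ x in Set.Ioc z 1, g x := by rw [hset]
    rw [hrw]
    -- the majorant
    set h : ℝ → ℝ := fun x => z ^ ((1:ℝ)/2 - 1) * (1 - x) ^ (b - 1) / B with hhdef
    have hcont1 : Continuous fun x : ℝ => (1 - x) ^ (b - 1) := by
      apply Continuous.comp (g := fun y : ℝ => y ^ (b - 1))
      · exact continuous_iff_continuousAt.2 fun y =>
          Real.continuousAt_rpow_const y (b - 1) (Or.inr (by linarith))
      · exact continuous_const.sub continuous_id
    have hint_h : IntegrableOn h (Set.Ioc z 1) := by
      apply IntegrableOn.mono_set (t := Set.Icc z 1) _ Set.Ioc_subset_Icc_self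
      apply ContinuousOn.integrableOn_Icc
      apply ContinuousOn.div_const
      exact (continuousOn_const.mul hcont1.continuousOn)
    have hint_g : IntegrableOn g (Set.Ioc z 1) := by
      apply IntegrableOn.mono_set (t := Set.Icc z 1) _ Set.Ioc_subset_Icc_self
      apply ContinuousOn.integrableOn_Icc
      apply ContinuousOn.div_const
      apply ContinuousOn.mul _ hcont1.continuousOn
      intro x hx
      exact (Real.continuousAt_rpow_const x _
        (Or.inl (ne_of_gt (lt_of_lt_of_le hz0 hx.1)))).continuousWithinAt
    have hmono : (∫ x in Set.Ioc z 1, g x) ≤ ∫ x in Set.Ioc z 1, h x := by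
      apply MeasureTheory.setIntegral_mono_on hint_g hint_h measurableSet_Ioc
      intro x hx
      have hx0 : 0 < x := lt_trans hz0 hx.1
      have hxz : x ^ ((1:ℝ)/2 - 1) ≤ z ^ ((1:ℝ)/2 - 1) :=
        Real.rpow_le_rpow_of_nonpos hz0 hx.1.le (by norm_num)
      have h1x : (0:ℝ) ≤ (1 - x) ^ (b - 1) := by
        apply Real.rpow_nonneg; linarith [hx.2]
      exact div_le_div_of_nonneg_right (mul_le_mul_of_nonneg_right hxz h1x) hB0.le
    -- compute the integral of the majorant
    have h1 : (∫ x in Set.Ioc z 1, (1 - x) ^ (b - 1)) = (1 - z) ^ b / b := by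
      rw [← intervalIntegral.integral_of_le hz1.le]
      rw [intervalIntegral.integral_comp_sub_left (fun u => u ^ (b - 1)) 1]
      rw [show (1:ℝ) - 1 = 0 by ring]
      rw [integral_rpow (Or.inl (by linarith : (-1:ℝ) < b - 1))]
      rw [Real.zero_rpow (by linarith : b - 1 + 1 ≠ 0)]
      rw [show b - 1 + 1 = b by ring]
      ring
    have hcalc : (∫ x in Set.Ioc z 1, h x) = z ^ ((1:ℝ)/2 - 1) * ((1 - z) ^ b / b) / B := by
      calc (∫ x in Set.Ioc z 1, h x)
          = ∫ x in Set.Ioc z 1, (z ^ ((1:ℝ)/2 - 1) / B) * ((1 - x) ^ (b - 1)) :=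
            MeasureTheory.setIntegral_congr_fun measurableSet_Ioc
              (fun x _ => by rw [hhdef]; ring)
        _ = (z ^ ((1:ℝ)/2 - 1) / B) * ∫ x in Set.Ioc z 1, (1 - x) ^ (b - 1) :=
            MeasureTheory.integral_const_mul _ _
        _ = z ^ ((1:ℝ)/2 - 1) * ((1 - z) ^ b / b) / B := by rw [h1]; ring
    -- lower bound for B
    have hBlow : Real.sqrt π / Real.sqrt b ≤ B := by
      have hΓhalf : Real.Gamma (b + 1/2) ≤ Real.sqrt b * Real.Gamma b :=
        Gamma_add_half_le_aux b hb0
      rw [hBdef, betaFun, Real.Gamma_one_half_eq]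
      rw [show (1:ℝ)/2 + b = b + 1/2 by ring]
      rw [div_le_div_iff₀ (Real.sqrt_pos.2 hb0) (Real.Gamma_pos_of_pos (by linarith))]
      have hπ : (0:ℝ) ≤ Real.sqrt π := Real.sqrt_nonneg _
      nlinarith [Real.sqrt_pos.2 hb0]
    -- pointwise bounds
    have hzle : z ^ ((1:ℝ)/2 - 1) ≤ Real.sqrt b := by
      have h1b : 1 / b ≤ z := by
        rw [div_le_iff₀ hb0]; linarith
      calc z ^ ((1:ℝ)/2 - 1) ≤ (1/b) ^ ((1:ℝ)/2 - 1) :=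
            Real.rpow_le_rpow_of_nonpos (by positivity) h1b (by norm_num)
        _ = b ^ ((1:ℝ)/2) := by
            rw [one_div, ← Real.rpow_neg_one b, ← Real.rpow_mul hb0.le]
            norm_num
        _ = Real.sqrt b := (Real.sqrt_eq_rpow b).symm
    have hexp : (1 - z) ^ b ≤ Real.exp (-M₂ / 6) := by
      calc (1 - z) ^ b ≤ Real.exp (-z) ^ b := by
            apply Real.rpow_le_rpow (by linarith) _ hb0.le
            linarith [Real.add_one_le_exp (-z)]
        _ = Real.exp (-z * b) := (Real.exp_mul (-z) b).symm
        _ ≤ Real.exp (-M₂ / 6) := by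
            apply Real.exp_le_exp.2
            rw [neg_mul]
            linarith
    -- final chain
    have h1π : (1:ℝ) ≤ Real.sqrt π :=
      Real.one_le_sqrt.2 (by linarith [Real.pi_gt_three])
    have hsb0 : (0:ℝ) < Real.sqrt b := Real.sqrt_pos.2 hb0
    have hsπ0 : (0:ℝ) < Real.sqrt π := by linarith
    have hstep1 : z ^ ((1:ℝ)/2 - 1) * ((1 - z) ^ b / b)
        ≤ Real.sqrt b * (Real.exp (-M₂ / 6) / b) := by
      apply mul_le_mul hzle _ _ (Real.sqrt_nonneg b)
      · exact div_le_div₀ hEpos.le hexp hb0 le_rfl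
      · exact div_nonneg (Real.rpow_nonneg (by linarith) _) hb0.le
    have hstep2 : z ^ ((1:ℝ)/2 - 1) * ((1 - z) ^ b / b) / B
        ≤ (Real.sqrt b * (Real.exp (-M₂ / 6) / b)) / (Real.sqrt π / Real.sqrt b) := by
      apply div_le_div₀ _ hstep1 (by positivity) hBlow
      positivity
    have heq2 : (Real.sqrt b * (Real.exp (-M₂ / 6) / b)) / (Real.sqrt π / Real.sqrt b)
        = Real.exp (-M₂ / 6) * (Real.sqrt b * Real.sqrt b) / (b * Real.sqrt π) := by
      field_simp
    have heq3 : Real.exp (-M₂ / 6) * (Real.sqrt b * Real.sqrt b) / (b * Real.sqrt π)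
        = Real.exp (-M₂ / 6) / Real.sqrt π := by
      rw [Real.mul_self_sqrt hb0.le]
      field_simp
    calc (∫ x in Set.Ioc z 1, g x)
        ≤ z ^ ((1:ℝ)/2 - 1) * ((1 - z) ^ b / b) / B := hmono.trans_eq hcalc
      _ ≤ (Real.sqrt b * (Real.exp (-M₂ / 6) / b)) / (Real.sqrt π / Real.sqrt b) := hstep2
      _ = Real.exp (-M₂ / 6) / Real.sqrt π := by rw [heq2, heq3]
      _ ≤ Real.exp (-M₂ / 6) := div_le_self hEpos.le h1π
      _ < 5 * Real.exp (-M₂ / 6) := by linarith
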